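/- arXiv:2304.14961 — 3 statements merged into one kernel-verified Lean document; each statement's English description precedes it below -/
import Mathlib

section
/- For every real p×q matrix B and every real number s ≥ 0, the symmetric block matrix [[s·I_p, B], [Bᵀ, s·I_q]] is positive semidefinite if and only if the matrix s²·I_q − Bᵀ B is positive semidefinite. -/
/-!
For `s > 0` the top-left block `s • 1` is positive definite, so the block matrix is positive
semidefinite iff its Schur complement `s • 1 - s⁻¹ • Bᴴ * B` is, i.e. iff `s ^ 2 • 1 - Bᴴ * B`
is. For `s = 0` both sides say `B = 0`: a positive semidefinite matrix with zero trace vanishes,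
and `-(Bᴴ * B)` has trace `-‖B‖²`.
-/

open Matrix
open scoped ComplexOrder

namespace Matrix

variable {m n 𝕜 : Type*} [RCLike 𝕜]

theorem posSemidef_smul_iff {c : ℝ} (hc : 0 < c) {M : Matrix n n 𝕜} :
    (c • M).PosSemidef ↔ M.PosSemidef :=
  ⟨fun h => by simpa [smul_smul, hc.ne'] using h.smul (inv_nonneg.mpr hc.le),
    fun h => h.smul hc.le⟩

variable [Fintype m] [Fintype n]

theorem posSemidef_neg_conjTranspose_mul_self_iff {B : Matrix m n 𝕜} :
    (-(Bᴴ * B)).PosSemidef ↔ B = 0 := by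
  refine ⟨fun h => trace_conjTranspose_mul_self_eq_zero_iff.mp (le_antisymm ?_
    (posSemidef_conjTranspose_mul_self B).trace_nonneg), fun h => by simpa [h] using .zero⟩
  simpa [trace_neg] using h.trace_nonneg

theorem posSemidef_fromBlocks_zero_zero_iff {B : Matrix m n 𝕜} :
    (fromBlocks 0 B Bᴴ 0).PosSemidef ↔ B = 0 := by
  refine ⟨fun h => ?_, fun h => by simpa [h] using .zero⟩
  have htrace : (fromBlocks 0 B Bᴴ 0).trace = 0 := by simp [trace, Fintype.sum_sum_type]
  exact (fromBlocks_inj.mp ((h.trace_eq_zero_iff.mp htrace).trans fromBlocks_zero.symm)).2.1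

variable [DecidableEq m] [DecidableEq n]

theorem posSemidef_fromBlocks_smul_one_iff_of_pos {s : ℝ} (hs : 0 < s) (B : Matrix m n 𝕜) :
    (fromBlocks (s • 1) B Bᴴ (s • 1)).PosSemidef ↔ (s ^ 2 • 1 - Bᴴ * B).PosSemidef := by
  have hinv : (s⁻¹ • (1 : Matrix m m 𝕜)) * (s • 1) = 1 := by
    rw [smul_mul_smul_comm, inv_mul_cancel₀ hs.ne', one_mul, one_smul]
  have : Invertible (s • (1 : Matrix m m 𝕜)) := invertibleOfLeftInverse _ _ hinv
  rw [PosDef.fromBlocks₁₁ B _ (PosDef.one.smul hs), inv_eq_left_inv hinv,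
    ← posSemidef_smul_iff hs]
  congr! 1
  rw [smul_sub, smul_smul, ← sq, Matrix.mul_smul, Matrix.mul_one, Matrix.smul_mul, smul_smul,
    mul_inv_cancel₀ hs.ne', one_smul]

theorem posSemidef_fromBlocks_smul_one_iff {s : ℝ} (hs : 0 ≤ s) (B : Matrix m n 𝕜) :
    (fromBlocks (s • 1) B Bᴴ (s • 1)).PosSemidef ↔ (s ^ 2 • 1 - Bᴴ * B).PosSemidef := by
  rcases hs.eq_or_lt with rfl | hpos
  · rw [zero_pow two_ne_zero, zero_smul, zero_smul, zero_sub,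
      posSemidef_fromBlocks_zero_zero_iff, posSemidef_neg_conjTranspose_mul_self_iff]
  · exact posSemidef_fromBlocks_smul_one_iff_of_pos hpos B

end Matrix

/-- For every real `p × q` matrix `B` and every real `s ≥ 0`, the symmetric
block matrix `[[s·I_p, B], [Bᵀ, s·I_q]]` is positive semidefinite if and only if
`s²·I_q − Bᵀ B` is positive semidefinite. -/
theorem stmt5 {p q : ℕ} (B : Matrix (Fin p) (Fin q) ℝ) (s : ℝ) (hs : 0 ≤ s) :
    (Matrix.fromBlocks (s • (1 : Matrix (Fin p) (Fin p) ℝ)) B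
        Bᵀ (s • (1 : Matrix (Fin q) (Fin q) ℝ))).PosSemidef ↔
    (s ^ 2 • (1 : Matrix (Fin q) (Fin q) ℝ) - Bᵀ * B).PosSemidef := by
  rw [← conjTranspose_eq_transpose_of_trivial]
  exact posSemidef_fromBlocks_smul_one_iff hs B
end

section
/- Let G be a real symmetric n×n matrix and X a real m×n matrix. Then G = Xᵀ X if and only if both G − Xᵀ X is positive semidefinite and the rank of the block matrix [[I_m, X], [Xᵀ, G]] equals m. -/
/-!
Eliminating the off-diagonal blocks with the unit block `I_m` (Schur complement) gives
`rank [[I_m, X], [Xᵀ, G]] = m + rank (G - Xᵀ X)`, so the rank condition says exactly that the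
Schur complement `G - Xᵀ X` vanishes, and then it is trivially positive semidefinite.
-/

open Matrix Module

namespace Submodule

theorem finrank_prod {K V W : Type*} [Field K] [AddCommGroup V] [AddCommGroup W] [Module K V]
    [Module K W] (p : Submodule K V) (q : Submodule K W) [FiniteDimensional K p]
    [FiniteDimensional K q] :
    finrank K (p.prod q) = finrank K p + finrank K q := by
  let e : p.prod q ≃ₗ[K] p × q :=
    { toFun x := (⟨x.1.1, x.2.1⟩, ⟨x.1.2, x.2.2⟩)
      invFun y := ⟨(y.1, y.2), y.1.2, y.2.2⟩
      map_add' _ _ := rfl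
      map_smul' _ _ := rfl
      left_inv _ := rfl
      right_inv _ := rfl }
  rw [e.finrank_eq, Module.finrank_prod]

end Submodule

namespace Matrix

variable {K : Type*} [Field K] {l m n o : Type*} [Fintype n] [Fintype o]

theorem rank_eq_zero_iff (A : Matrix m n K) : A.rank = 0 ↔ A = 0 := by
  classical
  rw [rank, Submodule.finrank_eq_zero, LinearMap.range_eq_bot, ← toLin'_apply',
    LinearEquiv.map_eq_zero_iff]

theorem rank_fromBlocks_zero₁₂_zero₂₁ (A : Matrix l n K) (D : Matrix m o K) :
    (fromBlocks A 0 0 D).rank = A.rank + D.rank := by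
  have hmul : (fromBlocks A 0 0 D).mulVecLin =
      (LinearEquiv.sumArrowLequivProdArrow l m K K).symm.toLinearMap ∘ₗ
        (A.mulVecLin.prodMap D.mulVecLin) ∘ₗ
          (LinearEquiv.sumArrowLequivProdArrow n o K K).toLinearMap := by
    ext v i
    cases i <;>
      simp [fromBlocks_mulVec, LinearEquiv.sumArrowLequivProdArrow, Equiv.sumArrowEquivProdArrow]
  rw [rank, hmul, LinearMap.range_comp, LinearEquiv.finrank_map_eq,
    LinearMap.range_comp_of_range_eq_top _ (LinearEquiv.range _), LinearMap.range_prodMap,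
    Submodule.finrank_prod, rank, rank]

variable [Fintype l] [Fintype m] [DecidableEq l] [DecidableEq m] [DecidableEq n]

theorem rank_fromBlocks_of_invertible₁₁ (A : Matrix m m K) (B : Matrix m n K)
    (C : Matrix l m K) (D : Matrix l n K) [Invertible A] :
    (fromBlocks A B C D).rank = Fintype.card m + (D - C * ⅟A * B).rank := by
  have hL : IsUnit (fromBlocks 1 0 (C * ⅟A) 1 : Matrix (m ⊕ l) (m ⊕ l) K).det := by simp
  have hR : IsUnit (fromBlocks 1 (⅟A * B) 0 1 : Matrix (m ⊕ n) (m ⊕ n) K).det := by simp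
  rw [fromBlocks_eq_of_invertible₁₁, rank_mul_eq_left_of_isUnit_det _ _ hR,
    rank_mul_eq_right_of_isUnit_det _ _ hL, rank_fromBlocks_zero₁₂_zero₂₁,
    rank_of_isUnit A (isUnit_of_invertible A)]

end Matrix

theorem stmt7_general {m n : ℕ} (G : Matrix (Fin n) (Fin n) ℝ)
    (X : Matrix (Fin m) (Fin n) ℝ) :
    G = Xᵀ * X ↔
      (G - Xᵀ * X).PosSemidef ∧
        (Matrix.fromBlocks (1 : Matrix (Fin m) (Fin m) ℝ) X Xᵀ G).rank = m := by
  have hrank :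
      (fromBlocks (1 : Matrix (Fin m) (Fin m) ℝ) X Xᵀ G).rank = m + (G - Xᵀ * X).rank := by
    let := invertibleOne (α := Matrix (Fin m) (Fin m) ℝ)
    simpa using rank_fromBlocks_of_invertible₁₁ (1 : Matrix (Fin m) (Fin m) ℝ) X Xᵀ G
  rw [hrank, Nat.add_eq_left, Matrix.rank_eq_zero_iff, ← sub_eq_zero]
  exact ⟨fun h => ⟨h ▸ .zero, h⟩, And.right⟩

/-- For a real symmetric `n × n` matrix `G` and a real `m × n` matrix `X`:
`G = Xᵀ X` if and only if `G − Xᵀ X ⪰ 0` and the rank of the block matrix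
`[[I_m, X], [Xᵀ, G]]` equals `m`. -/
theorem stmt7 {m n : ℕ} (G : Matrix (Fin n) (Fin n) ℝ) (hG : G.IsSymm)
    (X : Matrix (Fin m) (Fin n) ℝ) :
    G = Xᵀ * X ↔
      (G - Xᵀ * X).PosSemidef ∧
        (Matrix.fromBlocks (1 : Matrix (Fin m) (Fin m) ℝ) X Xᵀ G).rank = m :=
  stmt7_general G X
end

section
/- Let X be a real symmetric n×n matrix with eigenvalues λ₁ ≥ λ₂ ≥ ... ≥ λ_n (listed in decreasing order with multiplicity), and let 0 ≤ j ≤ n. Then the infimum of tr(U X) over all real symmetric n×n matrices U satisfying U ⪰ 0, I_n − U ⪰ 0, and tr(U) = j, equals the sum of the j smallest eigenvalues λ_{n−j+1} + ... + λ_n of X. -/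
/-!
Conjugating by the orthogonal eigenvector matrix of `X` turns `tr (U X)` into `∑ wᵢ λᵢ`, where
`w` is the diagonal of the conjugated `U`; the constraints force `0 ≤ wᵢ ≤ 1` and `∑ wᵢ = j`.
Over such weights `∑ wᵢ λᵢ` is minimised by putting weight one on the `j` smallest eigenvalues
(compare termwise with that indicator, around the threshold `λ_{n-j}`), and this choice of `w`
comes from a feasible `U`.
-/

open Matrix Finset Unitary

theorem Finset.sum_le_sum_mul_of_le_threshold {ι : Type*} [Fintype ι] [DecidableEq ι]
    (S : Finset ι) {lam u : ι → ℝ} (c : ℝ) (hS : ∀ i ∈ S, lam i ≤ c) (hSc : ∀ i ∉ S, c ≤ lam i)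
    (hu0 : ∀ i, 0 ≤ u i) (hu1 : ∀ i, u i ≤ 1) (hu : ∑ i, u i = #S) :
    ∑ i ∈ S, lam i ≤ ∑ i, u i * lam i := by
  have hterm (i : ι) : 0 ≤ (u i - if i ∈ S then 1 else 0) * (lam i - c) := by
    by_cases hi : i ∈ S
    · simpa [hi] using
        mul_nonneg_of_nonpos_of_nonpos (sub_nonpos.2 (hu1 i)) (sub_nonpos.2 (hS i hi))
    · simpa [hi] using mul_nonneg (hu0 i) (sub_nonneg.2 (hSc i hi))
  have hexpand : ∑ i, (u i - if i ∈ S then 1 else 0) * (lam i - c) =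
      (∑ i, u i * lam i - ∑ i ∈ S, lam i) - c * (∑ i, u i - #S) := by
    simp only [sub_mul, mul_sub, ite_mul, one_mul, zero_mul, sum_sub_distrib, sum_ite_mem,
      univ_inter, ← sum_mul, sum_const, nsmul_eq_mul]
    ring
  have := hexpand ▸ sum_nonneg fun i _ => hterm i
  rw [hu, sub_self, mul_zero, sub_zero] at this
  linarith

theorem Fin.card_filter_sub_le_val {n j : ℕ} (hj : j ≤ n) :
    #{i : Fin n | n - j ≤ (i : ℕ)} = j := by
  simp only [← not_lt, filter_not, card_univ_sdiff, Fin.card_filter_val_lt, Fintype.card_fin]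
  omega

theorem Fin.sum_filter_sub_le_val_le_sum_mul {n j : ℕ} (hj : j ≤ n) {lam u : Fin n → ℝ}
    (hlam : Antitone lam) (hu0 : ∀ i, 0 ≤ u i) (hu1 : ∀ i, u i ≤ 1) (hu : ∑ i, u i = j) :
    ∑ i ∈ univ.filter (fun i : Fin n => n - j ≤ (i : ℕ)), lam i ≤ ∑ i, u i * lam i := by
  rw [← Fin.card_filter_sub_le_val hj] at hu
  rcases j.eq_zero_or_pos with rfl | hj0
  · obtain ⟨c, hc⟩ := (Set.finite_range lam).bddBelow
    exact sum_le_sum_mul_of_le_threshold _ c (by simp) (fun i _ => hc ⟨i, rfl⟩) hu0 hu1 hu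
  · refine sum_le_sum_mul_of_le_threshold _ (lam ⟨n - j, by omega⟩) (fun i hi => hlam ?_)
      (fun i hi => hlam ?_) hu0 hu1 hu
    · simpa [Fin.le_def] using hi
    · simp only [mem_filter, mem_univ, true_and, not_le] at hi
      exact Fin.le_def.2 hi.le

namespace Matrix

variable {ι : Type*} [Fintype ι] [DecidableEq ι]

theorem trace_mul_diagonal {R : Type*} [NonUnitalNonAssocSemiring R] (W : Matrix ι ι R)
    (d : ι → R) : (W * diagonal d).trace = ∑ i, W i i * d i := by
  simp [trace, mul_diagonal]

theorem trace_conjStarAlgAut {R : Type*} [CommRing R] [StarRing R] (V : unitaryGroup ι R)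
    (A : Matrix ι ι R) : (conjStarAlgAut R _ V A).trace = A.trace := by
  rw [conjStarAlgAut_apply, trace_mul_cycle, coe_star_mul_self, one_mul]

theorem PosSemidef.conjStarAlgAut {R : Type*} [CommRing R] [PartialOrder R] [StarRing R]
    [StarOrderedRing R] {A : Matrix ι ι R} (hA : A.PosSemidef) (V : unitaryGroup ι R) :
    (Unitary.conjStarAlgAut R _ V A).PosSemidef := by
  simpa [conjStarAlgAut_apply, star_eq_conjTranspose] using
    hA.mul_mul_conjTranspose_same (V : Matrix ι ι R)

theorem IsHermitian.trace_mul_eq_sum_diag_mul_eigenvalues {X : Matrix ι ι ℝ}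
    (hX : X.IsHermitian) (U : Matrix ι ι ℝ) :
    (U * X).trace =
      ∑ i, conjStarAlgAut ℝ _ (star hX.eigenvectorUnitary) U i i * hX.eigenvalues i := by
  rw [← trace_conjStarAlgAut (star hX.eigenvectorUnitary), map_mul,
    conjStarAlgAut_star_eigenvectorUnitary]
  simpa using trace_mul_diagonal _ _

end Matrix

namespace Matrix.IsHermitian

variable {n : ℕ} {X : Matrix (Fin n) (Fin n) ℝ} (hX : X.IsHermitian) {lam : Fin n → ℝ}
  {σ : Equiv.Perm (Fin n)} {j : ℕ}
include hX

theorem sum_filter_le_trace_mul (hlam : Antitone lam) (hσ : lam = hX.eigenvalues ∘ σ)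
    (hj : j ≤ n) {U : Matrix (Fin n) (Fin n) ℝ} (hU : U.PosSemidef) (hIU : (1 - U).PosSemidef)
    (htr : U.trace = j) :
    ∑ i ∈ univ.filter (fun i : Fin n => n - j ≤ (i : ℕ)), lam i ≤ (U * X).trace := by
  set W := conjStarAlgAut ℝ _ (star hX.eigenvectorUnitary) U
  have hW : W.PosSemidef := hU.conjStarAlgAut _
  have hIW : (1 - W).PosSemidef := by
    simpa [W, map_sub, map_one] using hIU.conjStarAlgAut (star hX.eigenvectorUnitary)
  have htrW : ∑ i, W (σ i) (σ i) = j := by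
    rw [Equiv.sum_comp σ (fun k => W k k)]
    exact (trace_conjStarAlgAut _ U).trans htr
  have hW1 (i : Fin n) : W i i ≤ 1 := by simpa using hIW.diag_nonneg (i := i)
  rw [hX.trace_mul_eq_sum_diag_mul_eigenvalues, ← Equiv.sum_comp σ]
  subst hσ
  exact Fin.sum_filter_sub_le_val_le_sum_mul hj hlam (fun i => hW.diag_nonneg)
    (fun i => hW1 (σ i)) htrW

theorem exists_trace_mul_eq_sum_filter (hσ : lam = hX.eigenvalues ∘ σ) (hj : j ≤ n) :
    ∃ U : Matrix (Fin n) (Fin n) ℝ, U.IsSymm ∧ U.PosSemidef ∧ (1 - U).PosSemidef ∧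
      U.trace = j ∧
        (U * X).trace = ∑ i ∈ univ.filter (fun i : Fin n => n - j ≤ (i : ℕ)), lam i := by
  set u : Fin n → ℝ := fun k => if n - j ≤ (σ.symm k : ℕ) then 1 else 0
  set V := hX.eigenvectorUnitary
  have hU : (conjStarAlgAut ℝ _ V (diagonal u)).PosSemidef :=
    (PosSemidef.diagonal fun k => by positivity).conjStarAlgAut V
  have hIU : (1 - conjStarAlgAut ℝ _ V (diagonal u)).PosSemidef := by
    rw [← map_one (conjStarAlgAut ℝ _ V), ← map_sub, ← diagonal_one, diagonal_sub]
    exact (PosSemidef.diagonal fun k => by simp only [u]; split_ifs <;> norm_num).conjStarAlgAut V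
  have hback : conjStarAlgAut ℝ _ (star V) (conjStarAlgAut ℝ _ V (diagonal u)) = diagonal u := by
    rw [← conjStarAlgAut_mul_apply, star_mul_self, map_one, StarAlgEquiv.one_apply]
  refine ⟨_, isHermitian_iff_isSymm.1 hU.1, hU, hIU, ?_, ?_⟩
  · rw [trace_conjStarAlgAut, trace_diagonal, ← Equiv.sum_comp σ]
    simp only [u, Equiv.symm_apply_apply, sum_boole, Fin.card_filter_sub_le_val hj]
  · rw [hX.trace_mul_eq_sum_diag_mul_eigenvalues, hback, ← Equiv.sum_comp σ, sum_filter]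
    simp [u, hσ]

end Matrix.IsHermitian

/-- Let `X` be a real symmetric `n × n` matrix with eigenvalues
`lam 0 ≥ lam 1 ≥ ... ≥ lam (n-1)` (listed in decreasing order with multiplicity), and let
`0 ≤ j ≤ n`. The infimum of `tr (U X)` over all real symmetric `n × n` matrices `U` with
`U ⪰ 0`, `I_n − U ⪰ 0` and `tr U = j` equals the sum of the `j` smallest eigenvalues of
`X`, i.e. `lam (n-j) + ... + lam (n-1)`. -/
theorem stmt12 {n : ℕ} (X : Matrix (Fin n) (Fin n) ℝ) (hX : X.IsHermitian)
    (lam : Fin n → ℝ)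
    (hdec : ∀ i j : Fin n, i ≤ j → lam j ≤ lam i)
    (heig : ∃ σ : Equiv.Perm (Fin n), lam = hX.eigenvalues ∘ σ)
    (j : ℕ) (hj : j ≤ n) :
    sInf {t : ℝ | ∃ U : Matrix (Fin n) (Fin n) ℝ, U.IsSymm ∧ U.PosSemidef ∧
        ((1 : Matrix (Fin n) (Fin n) ℝ) - U).PosSemidef ∧
        U.trace = (j : ℝ) ∧ t = (U * X).trace} =
      ∑ i ∈ Finset.univ.filter (fun i : Fin n => n - j ≤ (i : ℕ)), lam i := by
  obtain ⟨σ, hσ⟩ := heig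
  obtain ⟨U, hUsymm, hU, hIU, htr, hUX⟩ := hX.exists_trace_mul_eq_sum_filter hσ hj
  refine IsLeast.csInf_eq ⟨⟨U, hUsymm, hU, hIU, htr, hUX.symm⟩, ?_⟩
  rintro t ⟨U, -, hU, hIU, htr, rfl⟩
  exact hX.sum_filter_le_trace_mul hdec hσ hj hU hIU htr
end
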